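/- For A ∈ S^{3×3} let q_A : ℝ^{3×3} → ℝ be the quadratic form q_A(F) = A : cof(F^a), where F^a = (F−Fᵀ)/2. Then the following three conditions are equivalent: (i) q_A is convex; (ii) q_A is rank-one convex, i.e., for every F ∈ ℝ^{3×3} and all a, b ∈ ℝ³ the map t ↦ q_A(F + t·a⊗b) is convex; (iii) A is positive semi-definite. -/

import Mathlib

/-!
For antisymmetric `W` with axial vector `w` (so `W x = w × x`) one has `cof W = w ⊗ w`, hence
`q_A(F) = A w · w` with `w` the axial vector of `Fᵃ`, which is linear in `F`. So `q_A` is a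
quadratic form in `w`, convex when `A` is positive semi-definite. Conversely, along the line
`t ↦ t a ⊗ b` the form equals `t² q_A(a ⊗ b)`, so rank-one convexity forces `q_A(a ⊗ b) ≥ 0`.
The axial vector of `a ⊗ b` is `(b × a)/2`; for `a ≠ 0` orthogonal to `x` and `b = a × x` it is
`|a|² x / 2`, whence `A x · x ≥ 0`.
-/

open Matrix

/-- The antisymmetric part `(F − Fᵀ)/2` of a 3×3 matrix. -/
noncomputable def antiPart (F : Matrix (Fin 3) (Fin 3) ℝ) : Matrix (Fin 3) (Fin 3) ℝ :=
  (1 / 2 : ℝ) • (F - Fᵀ)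

/-- The cofactor matrix: `(cof F)_{ij} = (-1)^{i+j}` times the determinant of the 2×2
matrix obtained from `F` by deleting row `i` and column `j`. -/
noncomputable def cof (F : Matrix (Fin 3) (Fin 3) ℝ) : Matrix (Fin 3) (Fin 3) ℝ :=
  Matrix.of fun i j =>
    (-1 : ℝ) ^ ((i : ℕ) + (j : ℕ)) * (F.submatrix i.succAbove j.succAbove).det

/-- Frobenius inner product `A:B = Σ_{i,j} A_{ij} B_{ij}` of 3×3 matrices. -/
def mdot (A B : Matrix (Fin 3) (Fin 3) ℝ) : ℝ := ∑ i, ∑ j, A i j * B i j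

/-- `A ∈ S^{3×3}` is positive semi-definite: `Ax·x ≥ 0` for all `x ∈ ℝ³`. -/
def PosSemidefM (A : Matrix (Fin 3) (Fin 3) ℝ) : Prop :=
  ∀ x : Fin 3 → ℝ, 0 ≤ A.mulVec x ⬝ᵥ x

/-- The quadratic form `q_A(F) = A : cof (Fᵃ)`. -/
noncomputable def qA (A : Matrix (Fin 3) (Fin 3) ℝ) (F : Matrix (Fin 3) (Fin 3) ℝ) : ℝ :=
  mdot A (cof (antiPart F))

/-- `W : ℝ^{3×3} → ℝ` is rank-one convex if it is convex along all rank-one lines. -/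
def RankOneConvex3 (W : Matrix (Fin 3) (Fin 3) ℝ → ℝ) : Prop :=
  ∀ (F : Matrix (Fin 3) (Fin 3) ℝ) (a b : Fin 3 → ℝ),
    ConvexOn ℝ Set.univ (fun t : ℝ => W (F + t • vecMulVec a b))

/-- `axialVector F` is the vector `w` with `antiPart F *ᵥ x = w ⨯₃ x`. -/
noncomputable def axialVector : Matrix (Fin 3) (Fin 3) ℝ →ₗ[ℝ] Fin 3 → ℝ where
  toFun F := ![(F 2 1 - F 1 2) / 2, (F 0 2 - F 2 0) / 2, (F 1 0 - F 0 1) / 2]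
  map_add' F G := by ext i; fin_cases i <;> simp <;> ring
  map_smul' c F := by ext i; fin_cases i <;> simp <;> ring

theorem cof_antiPart_eq_vecMulVec (F : Matrix (Fin 3) (Fin 3) ℝ) :
    cof (antiPart F) = vecMulVec (axialVector F) (axialVector F) := by
  ext i j
  fin_cases i <;> fin_cases j <;>
    simp [cof, antiPart, axialVector, vecMulVec_apply, det_fin_two, Fin.succAbove, Fin.lt_def,
      -Fin.val_pos_iff] <;> ring

theorem mdot_vecMulVec (A : Matrix (Fin 3) (Fin 3) ℝ) (u v : Fin 3 → ℝ) :
    mdot A (vecMulVec u v) = A *ᵥ v ⬝ᵥ u := by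
  simp [mdot, vecMulVec_apply, mulVec, dotProduct, Fin.sum_univ_three]
  ring

theorem qA_eq_mulVec_dotProduct (A F : Matrix (Fin 3) (Fin 3) ℝ) :
    qA A F = A *ᵥ axialVector F ⬝ᵥ axialVector F := by
  rw [qA, cof_antiPart_eq_vecMulVec, mdot_vecMulVec]

theorem axialVector_vecMulVec (a b : Fin 3 → ℝ) :
    axialVector (vecMulVec a b) = (1 / 2 : ℝ) • (b ⨯₃ a) := by
  ext i; fin_cases i <;> simp [axialVector, vecMulVec_apply, cross_apply] <;> ring

section QuadraticForm

variable {n : Type*} [Fintype n] (A : Matrix n n ℝ)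

theorem mulVec_smul_dotProduct_smul (c : ℝ) (x : n → ℝ) :
    A *ᵥ (c • x) ⬝ᵥ (c • x) = c ^ 2 * (A *ᵥ x ⬝ᵥ x) := by
  simp only [mulVec_smul, smul_dotProduct, dotProduct_smul, smul_eq_mul]
  ring

theorem mulVec_dotProduct_smul_add_smul (x y : n → ℝ) {s t : ℝ} (h : s + t = 1) :
    A *ᵥ (s • x + t • y) ⬝ᵥ (s • x + t • y) =
      s * (A *ᵥ x ⬝ᵥ x) + t * (A *ᵥ y ⬝ᵥ y) - s * t * (A *ᵥ (x - y) ⬝ᵥ (x - y)) := by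
  obtain rfl : t = 1 - s := by linarith
  simp only [mulVec_add, mulVec_sub, mulVec_smul, add_dotProduct, dotProduct_add, sub_dotProduct,
    dotProduct_sub, smul_dotProduct, dotProduct_smul, smul_eq_mul]
  ring

variable {A} in
theorem convexOn_mulVec_dotProduct_self (hA : ∀ x, 0 ≤ A *ᵥ x ⬝ᵥ x) :
    ConvexOn ℝ Set.univ fun x => A *ᵥ x ⬝ᵥ x := by
  refine ⟨convex_univ, fun x _ y _ s t hs ht hst => ?_⟩
  dsimp only
  rw [mulVec_dotProduct_smul_add_smul A x y hst]
  have := mul_nonneg (mul_nonneg hs ht) (hA (x - y))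
  simp only [smul_eq_mul]
  linarith

end QuadraticForm

theorem nonneg_of_convexOn_sq_mul {c : ℝ} (h : ConvexOn ℝ Set.univ fun t : ℝ => t ^ 2 * c) :
    0 ≤ c := by
  have := h.2 (Set.mem_univ (-1)) (Set.mem_univ 1) (by norm_num : (0 : ℝ) ≤ 1 / 2)
    (by norm_num : (0 : ℝ) ≤ 1 / 2) (by norm_num)
  norm_num at this
  linarith

theorem ConvexOn.rankOneConvex3 {W : Matrix (Fin 3) (Fin 3) ℝ → ℝ}
    (hW : ConvexOn ℝ Set.univ W) : RankOneConvex3 W := fun F a b => by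
  have h :=
    (hW.translate_right F).comp_linearMap (LinearMap.toSpanSingleton ℝ _ (vecMulVec a b))
  simp only [Set.preimage_univ] at h
  exact h

theorem convexOn_qA {A : Matrix (Fin 3) (Fin 3) ℝ} (hA : PosSemidefM A) :
    ConvexOn ℝ Set.univ (qA A) := by
  have h := (convexOn_mulVec_dotProduct_self hA).comp_linearMap axialVector
  simp only [Set.preimage_univ] at h
  rwa [show qA A = (fun x => A *ᵥ x ⬝ᵥ x) ∘ axialVector from
    funext (qA_eq_mulVec_dotProduct A)]

theorem qA_smul (A F : Matrix (Fin 3) (Fin 3) ℝ) (c : ℝ) : qA A (c • F) = c ^ 2 * qA A F := by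
  rw [qA_eq_mulVec_dotProduct, qA_eq_mulVec_dotProduct, map_smul, mulVec_smul_dotProduct_smul]

theorem RankOneConvex3.qA_vecMulVec_nonneg {A : Matrix (Fin 3) (Fin 3) ℝ}
    (h : RankOneConvex3 (qA A)) (a b : Fin 3 → ℝ) : 0 ≤ qA A (vecMulVec a b) :=
  nonneg_of_convexOn_sq_mul <| by simpa [qA_smul] using h 0 a b

theorem posSemidefM_of_qA_vecMulVec_nonneg {A : Matrix (Fin 3) (Fin 3) ℝ}
    (h : ∀ a b, 0 ≤ qA A (vecMulVec a b)) : PosSemidefM A := by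
  intro x
  obtain ⟨a, ha, hax⟩ := exists_ne_zero_dotProduct_eq_zero x
  have haxial : axialVector (vecMulVec a (a ⨯₃ x)) = ((a ⬝ᵥ a) / 2) • x := by
    rw [axialVector_vecMulVec, cross_cross_eq_smul_sub_smul, dotProduct_comm x a, hax]
    module
  have hpos : 0 < (a ⬝ᵥ a / 2) ^ 2 := by
    have := dotProduct_self_eq_zero.not.mpr ha
    positivity
  have hqA := h a (a ⨯₃ x)
  rw [qA_eq_mulVec_dotProduct, haxial, mulVec_smul_dotProduct_smul] at hqA
  exact nonneg_of_mul_nonneg_right (by linarith) hpos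

theorem qA_convexity_equivalences_general (A : Matrix (Fin 3) (Fin 3) ℝ) :
    (ConvexOn ℝ Set.univ (qA A) ↔ RankOneConvex3 (qA A)) ∧
    (RankOneConvex3 (qA A) ↔ PosSemidefM A) := by
  have hpsd (h : RankOneConvex3 (qA A)) : PosSemidefM A :=
    posSemidefM_of_qA_vecMulVec_nonneg h.qA_vecMulVec_nonneg
  exact ⟨⟨ConvexOn.rankOneConvex3, fun h => convexOn_qA (hpsd h)⟩,
    ⟨hpsd, fun h => (convexOn_qA h).rankOneConvex3⟩⟩

/-- For `A ∈ S^{3×3}`, convexity of `q_A`, rank-one convexity of `q_A`, and positive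
semi-definiteness of `A` are equivalent. -/
theorem qA_convexity_equivalences (A : Matrix (Fin 3) (Fin 3) ℝ) (hA : A.IsSymm) :
    (ConvexOn ℝ Set.univ (qA A) ↔ RankOneConvex3 (qA A)) ∧
    (RankOneConvex3 (qA A) ↔ PosSemidefM A) :=
  qA_convexity_equivalences_general A
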